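/- Let A ∈ ℝ^{n×n}, B ∈ ℝ^{n×m}, K ∈ ℝ^{m×n}, B_f ∈ ℝ^{n×m}, and let Ā, P, Ē ∈ ℝ^{q×q} (q = n + m) with P symmetric positive definite and Ē invertible, Q ∈ ℝ^{n×n} symmetric positive definite, C̄ ∈ ℝ^{p×q}, N ∈ ℝ^{q×p}, B̄_f ∈ ℝ^{q×m}, C_ω ∈ ℝ^{p×p}, H₁ ∈ ℝ^{m×p}, H₂ ∈ ℝ^{p×p}. Set L = Ē P⁻¹ N and assume: (i) the symmetric block matrix Ξ = [[Ξ₁₁, Ξ₁₂],[Ξ₁₂ᵀ, Ξ₂₂]] is negative definite, where Ξ₁₁ = Q(A+BK) + (A+BK)ᵀQ, Ξ₁₂ = Q·[−BK B_f] (an n×q block), and Ξ₂₂ = P Ē⁻¹ Ā + Āᵀ Ē⁻ᵀ P − N C̄ − C̄ᵀ Nᵀ; (ii) (H₁ C̄)ᵀ = P Ē⁻¹ B̄_f and (H₂ C̄)ᵀ = P Ē⁻¹ L C_ω. Let ρ = c + η with c ≥ 0, η ≥ 0, and ω̄ ≥ 0. Let x : ℝ → ℝ^n and ē : ℝ → ℝ^q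 be differentiable, and let d̄ : ℝ → ℝ^m, ω : ℝ → ℝ^p satisfy |d̄(t)_i| ≤ c and |ω(t)_j| ≤ ω̄ for all t, i, j. Suppose for all t: x′(t) = (A+BK)x(t) + [−BK B_f]·ē(t), and Ē ē′(t) = (Ā − L C̄) ē(t) + L C_ω(−ω̄·sgn(H₂ C̄ ē(t)) − ω(t)) + B̄_f(d̄(t) − ρ·sgn(H₁ C̄ ē(t))). Then V(t) = x(t)ᵀ Q x(t) + ē(t)ᵀ P ē(t) is differentiable with V′(t) ≤ 0 for every t, and V′(t) < 0 whenever (x(t), ē(t)) ≠ (0, 0). -/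

import Mathlib

/-!
Along trajectories the derivative of `V = xᵀQx + ēᵀPē` is `2xᵀQx' + 2ēᵀPē'`. Solving the observer
equation for `ē'` (via `Ē⁻¹`) and using `P Ē⁻¹ L = N` together with the matching conditions
`(H₁C̄)ᵀ = PĒ⁻¹B̄_f`, `(H₂C̄)ᵀ = PĒ⁻¹LC_ω`, this derivative equals the quadratic form of `Ξ` at
`ξ = (x, ē)` plus the sliding-mode terms `(H₂C̄ē)·(−ω̄ sgn(H₂C̄ē) − ω)` and
`(H₁C̄ē)·(d̄ − ρ sgn(H₁C̄ē))`. Both are `≤ 0` because the switching gains `ω̄` and `ρ ≥ c` dominate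
the disturbance bounds, so `V' ≤ ξᵀΞξ`, which is negative for `ξ ≠ 0`.
-/

open Matrix

noncomputable def sgn {k : Type*} (s : k → ℝ) : k → ℝ := fun i => Real.sign (s i)

theorem Real.mul_sign_self (r : ℝ) : r * Real.sign r = |r| := by
  rcases lt_trichotomy r 0 with h | rfl | h
  · simp [Real.sign_of_neg h, abs_of_neg h]
  · simp
  · simp [Real.sign_of_pos h, abs_of_pos h]

theorem sub_smul_sgn_dotProduct_nonpos {ι : Type*} [Fintype ι] {d : ι → ℝ} {c ρ : ℝ}
    (hd : ∀ i, |d i| ≤ c) (hcρ : c ≤ ρ) (r : ι → ℝ) : (d - ρ • sgn r) ⬝ᵥ r ≤ 0 := by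
  refine Finset.sum_nonpos fun i _ => ?_
  have hdr : d i * r i ≤ c * |r i| := by
    calc d i * r i ≤ |d i * r i| := le_abs_self _
      _ = |d i| * |r i| := abs_mul _ _
      _ ≤ c * |r i| := mul_le_mul_of_nonneg_right (hd i) (abs_nonneg _)
  have hsr : ρ * sgn r i * r i = ρ * |r i| := by
    rw [mul_assoc, mul_comm (sgn r i), sgn, Real.mul_sign_self]
  simp only [Pi.sub_apply, Pi.smul_apply, smul_eq_mul, sub_mul, hsr]
  nlinarith [abs_nonneg (r i)]

theorem Matrix.IsSymm.dotProduct_mulVec_comm {ι α : Type*} [Fintype ι] [CommSemiring α]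
    {M : Matrix ι ι α} (hM : M.IsSymm) (u v : ι → α) : u ⬝ᵥ M *ᵥ v = v ⬝ᵥ M *ᵥ u := by
  conv_lhs => rw [← hM.eq]
  exact dotProduct_transpose_mulVec M u v

theorem HasDerivAt.dotProduct {ι 𝕜 : Type*} [Fintype ι] [NontriviallyNormedField 𝕜]
    {u v : 𝕜 → ι → 𝕜} {u' v' : ι → 𝕜} {t : 𝕜} (hu : HasDerivAt u u' t) (hv : HasDerivAt v v' t) :
    HasDerivAt (fun t => u t ⬝ᵥ v t) (u' ⬝ᵥ v t + u t ⬝ᵥ v') t := by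
  have h := HasDerivAt.fun_sum (u := Finset.univ) fun i _ =>
    (hasDerivAt_pi.mp hu i).fun_mul (hasDerivAt_pi.mp hv i)
  rwa [Finset.sum_add_distrib] at h

theorem HasDerivAt.mulVec {ι κ 𝕜 : Type*} [Fintype κ] [NontriviallyNormedField 𝕜]
    (M : Matrix ι κ 𝕜) {v : 𝕜 → κ → 𝕜} {v' : κ → 𝕜} {t : 𝕜} (hv : HasDerivAt v v' t) :
    HasDerivAt (fun t => M *ᵥ v t) (M *ᵥ v') t :=
  hasDerivAt_pi.mpr fun _ => HasDerivAt.fun_sum fun j _ => (hasDerivAt_pi.mp hv j).const_mul _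

theorem HasDerivAt.dotProduct_mulVec_self {ι 𝕜 : Type*} [Fintype ι] [NontriviallyNormedField 𝕜]
    {M : Matrix ι ι 𝕜} (hM : M.IsSymm) {u : 𝕜 → ι → 𝕜} {u' : ι → 𝕜} {t : 𝕜} (hu : HasDerivAt u u' t) :
    HasDerivAt (fun t => u t ⬝ᵥ M *ᵥ u t) (2 * (u t ⬝ᵥ M *ᵥ u')) t := by
  convert hu.dotProduct (hu.mulVec M) using 1
  rw [hM.dotProduct_mulVec_comm u']
  ring

theorem dotProduct_add_transpose_mulVec_self {ι α : Type*} [Fintype ι] [CommSemiring α]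
    (S : Matrix ι ι α) (v : ι → α) : v ⬝ᵥ (S + Sᵀ) *ᵥ v = 2 * (v ⬝ᵥ S *ᵥ v) := by
  rw [add_mulVec, dotProduct_add, dotProduct_transpose_mulVec]
  ring

theorem sumElim_dotProduct_fromBlocks_mulVec {ι κ α : Type*} [Fintype ι] [Fintype κ]
    [CommSemiring α] (M₁₁ : Matrix ι ι α) (T : Matrix ι κ α) (M₂₂ : Matrix κ κ α)
    (x : ι → α) (e : κ → α) :
    Sum.elim x e ⬝ᵥ fromBlocks M₁₁ T Tᵀ M₂₂ *ᵥ Sum.elim x e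
      = x ⬝ᵥ M₁₁ *ᵥ x + 2 * (x ⬝ᵥ T *ᵥ e) + e ⬝ᵥ M₂₂ *ᵥ e := by
  rw [fromBlocks_mulVec, sumElim_dotProduct_sumElim]
  simp only [Sum.elim_comp_inl, Sum.elim_comp_inr, dotProduct_add, dotProduct_transpose_mulVec]
  ring

theorem Matrix.isUnit_det_of_dotProduct_mulVec_pos {ι : Type*} [Fintype ι] [DecidableEq ι]
    {M : Matrix ι ι ℝ} (hM : M.IsSymm) (hpos : ∀ v : ι → ℝ, v ≠ 0 → 0 < v ⬝ᵥ M *ᵥ v) :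
    IsUnit M.det :=
  (M.isUnit_iff_isUnit_det).mp
    (PosDef.of_dotProduct_mulVec_pos (isHermitian_iff_isSymm.mpr hM)
      fun v hv => by simpa using hpos v hv).isUnit

theorem lyapunov_rate_le_fromBlocks_quadForm {ι κ : Type*} [Fintype ι] [Fintype κ]
    {Q : Matrix ι ι ℝ} {P S₂ : Matrix κ κ ℝ} {S₁ : Matrix ι ι ℝ} {T : Matrix ι κ ℝ}
    {x x' : ι → ℝ} {e e' w : κ → ℝ}
    (hx' : Q *ᵥ x' = S₁ *ᵥ x + T *ᵥ e) (he' : P *ᵥ e' = S₂ *ᵥ e + w) (hw : e ⬝ᵥ w ≤ 0) :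
    2 * (x ⬝ᵥ Q *ᵥ x') + 2 * (e ⬝ᵥ P *ᵥ e')
      ≤ Sum.elim x e ⬝ᵥ fromBlocks (S₁ + S₁ᵀ) T Tᵀ (S₂ + S₂ᵀ) *ᵥ Sum.elim x e := by
  rw [sumElim_dotProduct_fromBlocks_mulVec, dotProduct_add_transpose_mulVec_self,
    dotProduct_add_transpose_mulVec_self, hx', he', dotProduct_add, dotProduct_add]
  linarith

theorem mulVec_deriv_eq_of_observer_dynamics {ι π ν : Type*} [Fintype ι] [DecidableEq ι]
    [Fintype π] [Fintype ν] {P E Abar : Matrix ι ι ℝ} (hP : IsUnit P.det) (hE : IsUnit E.det)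
    {C : Matrix π ι ℝ} {N L : Matrix ι π ℝ} (hL : L = E * P⁻¹ * N)
    {Bfbar : Matrix ι ν ℝ} {Cω H₂ : Matrix π π ℝ} {H₁ : Matrix ν π ℝ}
    (hH₁ : (H₁ * C)ᵀ = P * E⁻¹ * Bfbar) (hH₂ : (H₂ * C)ᵀ = P * E⁻¹ * L * Cω)
    {e e' : ι → ℝ} {s : π → ℝ} {r : ν → ℝ}
    (he' : E *ᵥ e' = (Abar - L * C) *ᵥ e + (L * Cω) *ᵥ s + Bfbar *ᵥ r) :
    P *ᵥ e' = (P * E⁻¹ * Abar - N * C) *ᵥ e + ((H₂ * C)ᵀ *ᵥ s + (H₁ * C)ᵀ *ᵥ r) := by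
  have hPEL : P * E⁻¹ * L = N := by
    rw [hL, Matrix.mul_assoc, ← Matrix.mul_assoc E⁻¹, ← Matrix.mul_assoc E⁻¹,
      nonsing_inv_mul E hE, Matrix.one_mul, ← Matrix.mul_assoc, mul_nonsing_inv P hP,
      Matrix.one_mul]
  calc P *ᵥ e' = (P * E⁻¹) *ᵥ (E *ᵥ e') := by
        rw [mulVec_mulVec, Matrix.mul_assoc, nonsing_inv_mul E hE, Matrix.mul_one]
    _ = _ := by
        rw [he', hH₁, hH₂, ← hPEL]
        simp only [mulVec_add, mulVec_sub, mulVec_mulVec, sub_mulVec, Matrix.mul_assoc]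
        abel

/-- The augmented dimension `q = n + m` is the index type `Fin n ⊕ Fin m`, and `[−BK  B_f]` is
`fromCols (−BK) B_f`. -/
theorem stmt7_general {n m p : ℕ}
    (A : Matrix (Fin n) (Fin n) ℝ) (B : Matrix (Fin n) (Fin m) ℝ)
    (K : Matrix (Fin m) (Fin n) ℝ) (Bf : Matrix (Fin n) (Fin m) ℝ)
    (Abar P E : Matrix (Fin n ⊕ Fin m) (Fin n ⊕ Fin m) ℝ)
    (hPsymm : Pᵀ = P)
    (hPpos : ∀ x : Fin n ⊕ Fin m → ℝ, x ≠ 0 → 0 < x ⬝ᵥ P.mulVec x)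
    (hE : IsUnit E.det)
    (Q : Matrix (Fin n) (Fin n) ℝ)
    (hQsymm : Qᵀ = Q)
    (C : Matrix (Fin p) (Fin n ⊕ Fin m) ℝ) (N : Matrix (Fin n ⊕ Fin m) (Fin p) ℝ)
    (Bfbar : Matrix (Fin n ⊕ Fin m) (Fin m) ℝ) (Cω : Matrix (Fin p) (Fin p) ℝ)
    (H₁ : Matrix (Fin m) (Fin p) ℝ) (H₂ : Matrix (Fin p) (Fin p) ℝ)
    (L : Matrix (Fin n ⊕ Fin m) (Fin p) ℝ) (hL : L = E * P⁻¹ * N)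
    (Ξ : Matrix ((Fin n) ⊕ (Fin n ⊕ Fin m)) ((Fin n) ⊕ (Fin n ⊕ Fin m)) ℝ)
    (hΞ : Ξ = fromBlocks
      (Q * (A + B * K) + (A + B * K)ᵀ * Q)
      (Q * fromCols (-(B * K)) Bf)
      (Q * fromCols (-(B * K)) Bf)ᵀ
      (P * E⁻¹ * Abar + Abarᵀ * (E⁻¹)ᵀ * P - N * C - Cᵀ * Nᵀ))
    (hNegDef : ∀ ξ : Fin n ⊕ (Fin n ⊕ Fin m) → ℝ, ξ ≠ 0 → ξ ⬝ᵥ Ξ.mulVec ξ < 0)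
    (hH₁ : (H₁ * C)ᵀ = P * E⁻¹ * Bfbar)
    (hH₂ : (H₂ * C)ᵀ = P * E⁻¹ * L * Cω)
    (c η ρ ωb : ℝ) (hη : 0 ≤ η) (hρ : ρ = c + η)
    (x : ℝ → Fin n → ℝ) (hx : Differentiable ℝ x)
    (e : ℝ → Fin n ⊕ Fin m → ℝ) (he : Differentiable ℝ e)
    (d : ℝ → Fin m → ℝ) (ω : ℝ → Fin p → ℝ)
    (hd : ∀ t i, |d t i| ≤ c) (hω : ∀ t j, |ω t j| ≤ ωb)
    (hxdyn : ∀ t, deriv x t =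
      (A + B * K).mulVec (x t) + (fromCols (-(B * K)) Bf).mulVec (e t))
    (hedyn : ∀ t, E.mulVec (deriv e t) =
      (Abar - L * C).mulVec (e t)
        + (L * Cω).mulVec (-(ωb • sgn ((H₂ * C).mulVec (e t))) - ω t)
        + Bfbar.mulVec (d t - ρ • sgn ((H₁ * C).mulVec (e t)))) :
    Differentiable ℝ (fun t => x t ⬝ᵥ Q.mulVec (x t) + e t ⬝ᵥ P.mulVec (e t)) ∧
      (∀ t, deriv (fun t => x t ⬝ᵥ Q.mulVec (x t) + e t ⬝ᵥ P.mulVec (e t)) t ≤ 0) ∧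
      (∀ t, (x t, e t) ≠ (0, 0) →
        deriv (fun t => x t ⬝ᵥ Q.mulVec (x t) + e t ⬝ᵥ P.mulVec (e t)) t < 0) := by
  set V : ℝ → ℝ := fun t => x t ⬝ᵥ Q *ᵥ x t + e t ⬝ᵥ P *ᵥ e t
  set S₁ := Q * (A + B * K)
  set S₂ := P * E⁻¹ * Abar - N * C
  have hΞ_blocks : Ξ = fromBlocks (S₁ + S₁ᵀ) (Q * fromCols (-(B * K)) Bf)
      (Q * fromCols (-(B * K)) Bf)ᵀ (S₂ + S₂ᵀ) := by
    rw [hΞ]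
    simp only [S₁, S₂, transpose_sub, transpose_mul, hQsymm, hPsymm, Matrix.mul_assoc]
    congr 1
    abel
  have hV : ∀ t, HasDerivAt V (2 * (x t ⬝ᵥ Q *ᵥ deriv x t) + 2 * (e t ⬝ᵥ P *ᵥ deriv e t)) t :=
    fun t => ((hx t).hasDerivAt.dotProduct_mulVec_self hQsymm).add
      ((he t).hasDerivAt.dotProduct_mulVec_self hPsymm)
  have hdissip : ∀ t, e t ⬝ᵥ ((H₂ * C)ᵀ *ᵥ (-(ωb • sgn ((H₂ * C) *ᵥ e t)) - ω t)
      + (H₁ * C)ᵀ *ᵥ (d t - ρ • sgn ((H₁ * C) *ᵥ e t))) ≤ 0 := fun t => by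
    rw [dotProduct_add, dotProduct_transpose_mulVec, dotProduct_transpose_mulVec, neg_sub_comm]
    exact add_nonpos
      (sub_smul_sgn_dotProduct_nonpos (fun j => (abs_neg _).trans_le (hω t j)) le_rfl _)
      (sub_smul_sgn_dotProduct_nonpos (hd t) (by linarith) _)
  have hrate : ∀ t, deriv V t ≤ Sum.elim (x t) (e t) ⬝ᵥ Ξ *ᵥ Sum.elim (x t) (e t) := fun t => by
    rw [(hV t).deriv, hΞ_blocks]
    refine lyapunov_rate_le_fromBlocks_quadForm ?_ ?_ (hdissip t)
    · rw [hxdyn t, mulVec_add, mulVec_mulVec, mulVec_mulVec]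
    · exact mulVec_deriv_eq_of_observer_dynamics
        (isUnit_det_of_dotProduct_mulVec_pos hPsymm hPpos) hE hL hH₁ hH₂ (hedyn t)
  refine ⟨fun t => (hV t).differentiableAt, fun t => (hrate t).trans ?_,
    fun t hne => (hrate t).trans_lt (hNegDef _ ?_)⟩
  · rcases eq_or_ne (Sum.elim (x t) (e t)) 0 with h | h
    · rw [h, zero_dotProduct]
    · exact (hNegDef _ h).le
  · rwa [← Sum.elim_zero_zero, Ne, Sum.elim_eq_iff, ← Prod.mk.injEq]

/-- Theorem 2 of the paper: stability of the closed-loop system under the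
SMO-based compensation controller.  The augmented dimension `q = n + m` is modelled by the
index type `Fin n ⊕ Fin m`, and `[−BK  B_f]` by `fromColumns (−BK) B_f`. -/
theorem stmt7 {n m p : ℕ}
    (A : Matrix (Fin n) (Fin n) ℝ) (B : Matrix (Fin n) (Fin m) ℝ)
    (K : Matrix (Fin m) (Fin n) ℝ) (Bf : Matrix (Fin n) (Fin m) ℝ)
    (Abar P E : Matrix (Fin n ⊕ Fin m) (Fin n ⊕ Fin m) ℝ)
    (hPsymm : Pᵀ = P)
    (hPpos : ∀ x : Fin n ⊕ Fin m → ℝ, x ≠ 0 → 0 < x ⬝ᵥ P.mulVec x)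
    (hE : IsUnit E.det)
    (Q : Matrix (Fin n) (Fin n) ℝ)
    (hQsymm : Qᵀ = Q) (hQpos : ∀ x : Fin n → ℝ, x ≠ 0 → 0 < x ⬝ᵥ Q.mulVec x)
    (C : Matrix (Fin p) (Fin n ⊕ Fin m) ℝ) (N : Matrix (Fin n ⊕ Fin m) (Fin p) ℝ)
    (Bfbar : Matrix (Fin n ⊕ Fin m) (Fin m) ℝ) (Cω : Matrix (Fin p) (Fin p) ℝ)
    (H₁ : Matrix (Fin m) (Fin p) ℝ) (H₂ : Matrix (Fin p) (Fin p) ℝ)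
    (L : Matrix (Fin n ⊕ Fin m) (Fin p) ℝ) (hL : L = E * P⁻¹ * N)
    (Ξ : Matrix ((Fin n) ⊕ (Fin n ⊕ Fin m)) ((Fin n) ⊕ (Fin n ⊕ Fin m)) ℝ)
    (hΞ : Ξ = fromBlocks
      (Q * (A + B * K) + (A + B * K)ᵀ * Q)
      (Q * fromCols (-(B * K)) Bf)
      (Q * fromCols (-(B * K)) Bf)ᵀ
      (P * E⁻¹ * Abar + Abarᵀ * (E⁻¹)ᵀ * P - N * C - Cᵀ * Nᵀ))
    (hNegDef : ∀ ξ : Fin n ⊕ (Fin n ⊕ Fin m) → ℝ, ξ ≠ 0 → ξ ⬝ᵥ Ξ.mulVec ξ < 0)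
    (hH₁ : (H₁ * C)ᵀ = P * E⁻¹ * Bfbar)
    (hH₂ : (H₂ * C)ᵀ = P * E⁻¹ * L * Cω)
    (c η ρ ωb : ℝ) (hc : 0 ≤ c) (hη : 0 ≤ η) (hρ : ρ = c + η) (hωb : 0 ≤ ωb)
    (x : ℝ → Fin n → ℝ) (hx : Differentiable ℝ x)
    (e : ℝ → Fin n ⊕ Fin m → ℝ) (he : Differentiable ℝ e)
    (d : ℝ → Fin m → ℝ) (ω : ℝ → Fin p → ℝ)
    (hd : ∀ t i, |d t i| ≤ c) (hω : ∀ t j, |ω t j| ≤ ωb)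
    (hxdyn : ∀ t, deriv x t =
      (A + B * K).mulVec (x t) + (fromCols (-(B * K)) Bf).mulVec (e t))
    (hedyn : ∀ t, E.mulVec (deriv e t) =
      (Abar - L * C).mulVec (e t)
        + (L * Cω).mulVec (-(ωb • sgn ((H₂ * C).mulVec (e t))) - ω t)
        + Bfbar.mulVec (d t - ρ • sgn ((H₁ * C).mulVec (e t)))) :
    Differentiable ℝ (fun t => x t ⬝ᵥ Q.mulVec (x t) + e t ⬝ᵥ P.mulVec (e t)) ∧
      (∀ t, deriv (fun t => x t ⬝ᵥ Q.mulVec (x t) + e t ⬝ᵥ P.mulVec (e t)) t ≤ 0) ∧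
      (∀ t, (x t, e t) ≠ (0, 0) →
        deriv (fun t => x t ⬝ᵥ Q.mulVec (x t) + e t ⬝ᵥ P.mulVec (e t)) t < 0) :=
  stmt7_general A B K Bf Abar P E hPsymm hPpos hE Q hQsymm C N Bfbar Cω H₁ H₂ L hL Ξ hΞ hNegDef hH₁
    hH₂ c η ρ ωb hη hρ x hx e he d ω hd hω hxdyn hedyn
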